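/- If f is locally μ-integrable and g is C¹ with compact support, then f ⋆[L, μ] g is differentiable with total derivative D(f ⋆[L, μ] g) x₀ = (f ⋆[precompR G L, μ] (fderiv 𝕜 g)) x₀ at every point x₀, where precompR G L : E →L (G →L E') →L (G →L F) sends (x, T) to L(x, ·) ∘ T. -/
import Mathlib


open MeasureTheory Filter Function Metric Topology ContinuousLinearMap
open scoped Convolution

theorem hasFDerivAt_convolution
    {𝕜 G E E' F : Type*} [RCLike 𝕜]
    [NormedAddCommGroup E] [NormedAddCommGroup E'] [NormedAddCommGroup F]
    [NormedSpace 𝕜 E] [NormedSpace 𝕜 E'] [NormedSpace 𝕜 F]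
    [NormedSpace ℝ F] [CompleteSpace F]
    [NormedAddCommGroup G] [NormedSpace 𝕜 G] [FiniteDimensional 𝕜 G]
    [MeasurableSpace G] [BorelSpace G]
    (μ : Measure G) [SigmaFinite μ] [μ.IsAddLeftInvariant]
    (L : E →L[𝕜] E' →L[𝕜] F) (f : G → E) (g : G → E')
    (hf : LocallyIntegrable f μ) (hcg : HasCompactSupport g) (hg : ContDiff 𝕜 1 g)
    (x₀ : G) :
    HasFDerivAt (f ⋆[L, μ] g) ((f ⋆[L.precompR G, μ] fderiv 𝕜 g) x₀) x₀ := by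
  exact hcg.hasFDerivAt_convolution_right L hf hg x₀
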